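/- For every deterministic parity tree automaton B over Σ, the language L(B) is path-closed: PathClosure(L(B)) = L(B). Consequently, for every nondeterministic parity tree automaton A with L(A) ⊆ L(B), we have PathClosure(L(A)) ⊆ L(B). -/
import Mathlib


/-!
Common definitions: infinite binary trees, parity acceptance, paths and
path closure, nondeterministic top-down parity tree automata, game automata,
and ω-word parity / Büchi automata.
Directions are booleans: `false` = left (L), `true` = right (R).
-/

/-- A Σ-labelled infinite binary tree: a function from nodes (lists of
directions) to letters. -/
abbrev Tr (σ : Type) : Type := List Bool → σ

/-- The node reached from the root after following the first `i` directions
of the branch `d`, i.e. the list `[d 0, …, d (i-1)]`. -/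
def prefixNode (d : ℕ → Bool) (i : ℕ) : List Bool :=
  (List.range i).map d

/-- A sequence of priorities is (parity) accepting iff the maximal priority
occurring infinitely often is even. -/
def ParityAccept (c : ℕ → ℕ) : Prop :=
  ∃ p, Even p ∧ {i | c i = p}.Infinite ∧ ∀ q, p < q → {i | c i = q}.Finite

/-- The set of paths of a tree `t`: sequences `(a₀,d₀)(a₁,d₁)⋯` with
`aᵢ = t(d₀⋯d_{i-1})`. -/
def pathsOf {σ : Type} (t : Tr σ) : Set (ℕ → σ × Bool) :=
  {b | ∀ i, (b i).1 = t (prefixNode (fun j => (b j).2) i)}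

/-- The path closure of a language of trees. -/
def pathClosure {σ : Type} (L : Set (Tr σ)) : Set (Tr σ) :=
  {t | ∀ b ∈ pathsOf t, ∃ t' ∈ L, b ∈ pathsOf t'}

/-- A nondeterministic top-down parity tree automaton over the alphabet `σ`
with states `Q` (priorities are natural numbers). -/
structure PTA (σ Q : Type) where
  init : Q
  prio : Q → ℕ
  delta : Set (Q × σ × Q × Q)

namespace PTA

variable {σ Q : Type}

/-- The automaton `A` with its initial state replaced by `q`. -/
def withInit (A : PTA σ Q) (q : Q) : PTA σ Q :=
  { A with init := q }

/-- A run of `A` over the tree `t`. -/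
def IsRun (A : PTA σ Q) (t : Tr σ) (ρ : List Bool → Q) : Prop :=
  ρ [] = A.init ∧
  ∀ u : List Bool, (ρ u, t u, ρ (u ++ [false]), ρ (u ++ [true])) ∈ A.delta

/-- An accepting run: along every branch the parity condition holds. -/
def IsAcceptingRun (A : PTA σ Q) (t : Tr σ) (ρ : List Bool → Q) : Prop :=
  A.IsRun t ρ ∧ ∀ d : ℕ → Bool, ParityAccept (fun i => A.prio (ρ (prefixNode d i)))

/-- The language recognised by `A`. -/
def Lang (A : PTA σ Q) : Set (Tr σ) :=
  {t | ∃ ρ, A.IsAcceptingRun t ρ}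

/-- `Δ(q,a)`: the pairs of children states of transitions from `q` over `a`. -/
def deltaAt (A : PTA σ Q) (q : Q) (a : σ) : Set (Q × Q) :=
  {p | (q, a, p.1, p.2) ∈ A.delta}

/-- `A` is deterministic: `Δ(q,a)` is a singleton for every `q`, `a`. -/
def Deterministic (A : PTA σ Q) : Prop :=
  ∀ q a, ∃ p : Q × Q, A.deltaAt q a = {p}

/-- Every state of `A` is productive. -/
def AllProductive (A : PTA σ Q) : Prop :=
  ∀ q : Q, (Lang (A.withInit q)).Nonempty

/-- `A` is a game automaton with distinguished all-accepting state `top`: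
`top ≠ q₀`, `L(A_⊤) = Tr_Σ`, and every `Δ(q,a)` is either a conjunctive
singleton `{(q_L,q_R)}` or a disjunctive pair `{(q_L,⊤),(⊤,q_R)}` with
`q_L, q_R ≠ ⊤`. -/
def IsGameAutomaton (A : PTA σ Q) (top : Q) : Prop :=
  top ≠ A.init ∧
  Lang (A.withInit top) = Set.univ ∧
  ∀ q a,
    (∃ qL qR, qL ≠ top ∧ qR ≠ top ∧ A.deltaAt q a = {(qL, qR)}) ∨
    (∃ qL qR, qL ≠ top ∧ qR ≠ top ∧ A.deltaAt q a = {(qL, top), (top, qR)})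

/-- `δ ∈ Δ(b)`: an infinite sequence of transitions of `A` conform to the
path `b` given by its letters `a` and directions `d`: all `δ i` are
transitions, `δ 0` starts in the initial state, the letters match, and
consecutive transitions follow the chosen directions. -/
def ConformPath (A : PTA σ Q) (a : ℕ → σ) (d : ℕ → Bool)
    (δ : ℕ → Q × σ × Q × Q) : Prop :=
  (∀ i, δ i ∈ A.delta) ∧ (δ 0).1 = A.init ∧ (∀ i, (δ i).2.1 = a i) ∧
  ∀ i, (δ (i + 1)).1 = (if d i then (δ i).2.2.2 else (δ i).2.2.1)

/-- An infinite sequence of transitions is accepting iff the sequence of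
priorities of their source states is accepting. -/
def AcceptingTransSeq (A : PTA σ Q) (δ : ℕ → Q × σ × Q × Q) : Prop :=
  ParityAccept (fun i => A.prio (δ i).1)

end PTA

/-- A nondeterministic ω-word parity automaton. -/
structure NPW (σ Q : Type) where
  init : Q
  prio : Q → ℕ
  delta : Set (Q × σ × Q)

namespace NPW

variable {σ Q : Type}

/-- A run of `A` on the ω-word `w`. -/
def IsRun (A : NPW σ Q) (w : ℕ → σ) (ρ : ℕ → Q) : Prop :=
  ρ 0 = A.init ∧ ∀ i, (ρ i, w i, ρ (i + 1)) ∈ A.delta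

/-- The ω-language recognised by `A`. -/
def Lang (A : NPW σ Q) : Set (ℕ → σ) :=
  {w | ∃ ρ, A.IsRun w ρ ∧ ParityAccept (fun i => A.prio (ρ i))}

/-- `A` is deterministic: exactly one transition per state and letter. -/
def Deterministic (A : NPW σ Q) : Prop :=
  ∀ q a, ∃! q' : Q, (q, a, q') ∈ A.delta

end NPW

/-- A nondeterministic ω-word Büchi automaton. -/
structure NBW (σ Q : Type) where
  init : Q
  acc : Set Q
  delta : Set (Q × σ × Q)

namespace NBW

variable {σ Q : Type}

/-- A run of `A` on the ω-word `w`. -/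
def IsRun (A : NBW σ Q) (w : ℕ → σ) (ρ : ℕ → Q) : Prop :=
  ρ 0 = A.init ∧ ∀ i, (ρ i, w i, ρ (i + 1)) ∈ A.delta

/-- The ω-language recognised by `A`: some run visits `acc` infinitely often. -/
def Lang (A : NBW σ Q) : Set (ℕ → σ) :=
  {w | ∃ ρ, A.IsRun w ρ ∧ {i | ρ i ∈ A.acc}.Infinite}

end NBW

section Aux

variable {σ QB : Type}

/-- The unique pair of successor states of a deterministic automaton. -/
noncomputable def dstep (B : PTA σ QB) (hB : B.Deterministic) (q : QB) (a : σ) :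
    QB × QB :=
  (hB q a).choose

lemma dstep_spec (B : PTA σ QB) (hB : B.Deterministic) (q : QB) (a : σ) :
    B.deltaAt q a = {dstep B hB q a} := (hB q a).choose_spec

lemma mem_delta_iff (B : PTA σ QB) (hB : B.Deterministic) (q : QB) (a : σ)
    (x y : QB) : (q, a, x, y) ∈ B.delta ↔ (x, y) = dstep B hB q a := by
  have : ((x, y) ∈ B.deltaAt q a) ↔ (x, y) = dstep B hB q a := by
    rw [dstep_spec B hB q a]; simp
  simpa [PTA.deltaAt, Set.mem_setOf_eq] using this

/-- The canonical run of a deterministic automaton. -/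
noncomputable def canon (B : PTA σ QB) (hB : B.Deterministic) :
    QB → Tr σ → List Bool → QB
  | q, _, [] => q
  | q, t, d :: u =>
      canon B hB (if d then (dstep B hB q (t [])).2 else (dstep B hB q (t [])).1)
        (fun v => t (d :: v)) u

lemma canon_append (B : PTA σ QB) (hB : B.Deterministic) (q : QB) (t : Tr σ)
    (u : List Bool) (e : Bool) :
    canon B hB q t (u ++ [e]) =
      (if e then (dstep B hB (canon B hB q t u) (t u)).2
       else (dstep B hB (canon B hB q t u) (t u)).1) := by
  induction u generalizing q t with
  | nil => simp [canon]
  | cons d u ih =>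
      simp only [List.cons_append, canon]
      exact ih _ _

lemma canon_isRun (B : PTA σ QB) (hB : B.Deterministic) (t : Tr σ) :
    B.IsRun t (canon B hB B.init t) := by
  refine ⟨rfl, fun u => ?_⟩
  rw [mem_delta_iff B hB, canon_append, canon_append]
  simp

lemma prefixNode_succ (d : ℕ → Bool) (i : ℕ) :
    prefixNode d (i + 1) = prefixNode d i ++ [d i] := by
  simp [prefixNode, List.range_succ]

/-- Any run of a deterministic automaton agrees with the canonical run along
a branch, provided the trees agree along that branch. -/
lemma run_eq_canon_on_branch (B : PTA σ QB) (hB : B.Deterministic)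
    (t t' : Tr σ) (ρ : List Bool → QB) (hρ : B.IsRun t' ρ) (d : ℕ → Bool)
    (hagree : ∀ i, t' (prefixNode d i) = t (prefixNode d i)) :
    ∀ i, ρ (prefixNode d i) = canon B hB B.init t (prefixNode d i) := by
  intro i
  induction i with
  | zero =>
      simp [prefixNode, hρ.1, canon]
  | succ i ih =>
      rw [prefixNode_succ]
      have h1 := hρ.2 (prefixNode d i)
      rw [mem_delta_iff B hB] at h1
      have h2 : (ρ (prefixNode d i ++ [false]), ρ (prefixNode d i ++ [true]))
          = dstep B hB (canon B hB B.init t (prefixNode d i)) (t (prefixNode d i)) := by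
        rw [h1, ih, hagree]
      rw [canon_append]
      cases hd : d i
      · simpa using congrArg Prod.fst h2
      · simpa using congrArg Prod.snd h2

end Aux

/-- the language of a deterministic parity tree automaton is
path-closed, and consequently for every nondeterministic parity tree automaton
`A` with `L(A) ⊆ L(B)` we have `pathClosure (L(A)) ⊆ L(B)`. -/
theorem stmt8 {σ QB : Type} [Fintype σ] [Nonempty σ] [Fintype QB]
    (B : PTA σ QB) (hB : B.Deterministic) :
    pathClosure (PTA.Lang B) = PTA.Lang B ∧
    ∀ (QA : Type) [Fintype QA] (A : PTA σ QA),
      PTA.Lang A ⊆ PTA.Lang B → pathClosure (PTA.Lang A) ⊆ PTA.Lang B := by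
  have hmain : pathClosure (PTA.Lang B) = PTA.Lang B := by
    apply Set.Subset.antisymm
    · intro t ht
      refine ⟨canon B hB B.init t, canon_isRun B hB t, fun d => ?_⟩
      set b : ℕ → σ × Bool := fun i => (t (prefixNode d i), d i) with hb
      have hbd : (fun j => (b j).2) = d := rfl
      have hbt : b ∈ pathsOf t := by
        intro i; simp [hb, hbd]
      obtain ⟨t', ⟨ρ', hρ'run, hρ'acc⟩, hbt'⟩ := ht b hbt
      have hagree : ∀ i, t' (prefixNode d i) = t (prefixNode d i) := by
        intro i
        have := hbt' i
        rw [hbd] at this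
        exact this.symm
      have heq := run_eq_canon_on_branch B hB t t' ρ' hρ'run d hagree
      have : (fun i => B.prio (canon B hB B.init t (prefixNode d i)))
          = (fun i => B.prio (ρ' (prefixNode d i))) := by
        funext i; rw [heq i]
      rw [this]
      exact hρ'acc d
    · intro t ht b hbt
      exact ⟨t, ht, hbt⟩
  refine ⟨hmain, fun QA _ A hAB => ?_⟩
  intro t ht
  rw [← hmain]
  intro b hbt
  obtain ⟨t', ht', hbt'⟩ := ht b hbt
  exact ⟨t', hAB ht', hbt'⟩
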